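/- Let q > 0, q ≠ 1, p ∈ ℕ, n ≥ 1. For the Holstein-Primakoff realization of U_q[sl(n+1)] on F(n) (operators π(hᵢ), π(eᵢ), π(fᵢ) defined as in equations (10a)-(10c): π(e₁)|l⟩ = √([l₁][p-L+1])|l₁-1,l₂,...,lₙ⟩, π(f₁)|l⟩ = √([l₁+1][p-L])|l₁+1,...⟩, π(eᵢ)|l⟩ = √([l_{i-1}+1][lᵢ])|...,l_{i-1}+1,lᵢ-1,...⟩, π(fᵢ)|l⟩ = √([l_{i-1}][lᵢ+1])|...,l_{i-1}-1,lᵢ+1,...⟩ for i ≥ 2), both F₀(p;n) = span{|l⟩ : L ≤ p} and F₁(p;n) = span{|l⟩ : L > p} are invariant under all operators π(hᵢ), π(eᵢ), π(fᵢ), i = 1,...,n. -/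

import Mathlib

open Finsupp Function

noncomputable def qb (q x : ℝ) : ℝ := (q ^ x - q ^ (-x)) / (q - q⁻¹)

/-- `F₀(p;n)`: the span of the basis vectors `|l₁,…,lₙ⟩` with `l₁ + ⋯ + lₙ ≤ p`. -/
noncomputable def lowSub (n p : ℕ) : Submodule ℂ ((Fin n → ℕ) →₀ ℂ) :=
  Submodule.span ℂ {w : (Fin n → ℕ) →₀ ℂ | ∃ l : Fin n → ℕ, (∑ i, l i) ≤ p ∧ w = single l 1}

/-- `F₁(p;n)`: the span of the basis vectors `|l₁,…,lₙ⟩` with `l₁ + ⋯ + lₙ > p`. -/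
noncomputable def highSub (n p : ℕ) : Submodule ℂ ((Fin n → ℕ) →₀ ℂ) :=
  Submodule.span ℂ {w : (Fin n → ℕ) →₀ ℂ | ∃ l : Fin n → ℕ, p < (∑ i, l i) ∧ w = single l 1}

lemma qb_zero' (q : ℝ) : qb q 0 = 0 := by simp [qb]

lemma sum_update_succ {n : ℕ} (l : Fin n → ℕ) (j : Fin n) :
    ∑ k, Function.update l j (l j + 1) k = (∑ k, l k) + 1 := by
  classical
  rw [Finset.sum_update_of_mem (Finset.mem_univ j), Finset.sdiff_singleton_eq_erase,
    ← Finset.add_sum_erase _ l (Finset.mem_univ j)]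
  ring

lemma hp_aux (q : ℝ) (n p : ℕ) (hn : 1 ≤ n)
    (h e f : ℕ → (((Fin n → ℕ) →₀ ℂ) →ₗ[ℂ] ((Fin n → ℕ) →₀ ℂ)))
    (hh1 : ∀ l : Fin n → ℕ, h 1 (single l 1) =
      (((p : ℝ) - (∑ k, (l k : ℝ)) - (l ⟨0, hn⟩ : ℝ) : ℝ) : ℂ) • single l 1)
    (hhi : ∀ i (hi2 : 2 ≤ i) (hin : i ≤ n) (l : Fin n → ℕ), h i (single l 1) =
      (((l ⟨i - 2, by have _hx := hin; omega⟩ : ℝ) - (l ⟨i - 1, by have _hx := hin; omega⟩ : ℝ) : ℝ) : ℂ) • single l 1)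
    (he10 : ∀ l : Fin n → ℕ, l ⟨0, hn⟩ = 0 → e 1 (single l 1) = 0)
    (he1 : ∀ l : Fin n → ℕ,
      e 1 (single (update l ⟨0, hn⟩ (l ⟨0, hn⟩ + 1)) 1) =
      ((Real.sqrt (qb q ((l ⟨0, hn⟩ : ℝ) + 1) *
          qb q ((p : ℝ) - ∑ k, (l k : ℝ))) : ℝ) : ℂ) • single l 1)
    (hf1 : ∀ l : Fin n → ℕ,
      f 1 (single l 1) =
      ((Real.sqrt (qb q ((l ⟨0, hn⟩ : ℝ) + 1) *
          qb q ((p : ℝ) - ∑ k, (l k : ℝ))) : ℝ) : ℂ) •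
        single (update l ⟨0, hn⟩ (l ⟨0, hn⟩ + 1)) 1)
    (hei0 : ∀ i (hi2 : 2 ≤ i) (hin : i ≤ n) (l : Fin n → ℕ),
      l ⟨i - 1, by have _hx := hin; omega⟩ = 0 → e i (single l 1) = 0)
    (hei : ∀ i (hi2 : 2 ≤ i) (hin : i ≤ n) (l : Fin n → ℕ),
      e i (single (update l ⟨i - 1, by have _hx := hin; omega⟩ (l ⟨i - 1, by have _hx := hin; omega⟩ + 1)) 1) =
      ((Real.sqrt (qb q ((l ⟨i - 2, by have _hx := hin; omega⟩ : ℝ) + 1) *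
          qb q ((l ⟨i - 1, by have _hx := hin; omega⟩ : ℝ) + 1)) : ℝ) : ℂ) •
        single (update l ⟨i - 2, by have _hx := hin; omega⟩ (l ⟨i - 2, by have _hx := hin; omega⟩ + 1)) 1)
    (hfi0 : ∀ i (hi2 : 2 ≤ i) (hin : i ≤ n) (l : Fin n → ℕ),
      l ⟨i - 2, by have _hx := hin; omega⟩ = 0 → f i (single l 1) = 0)
    (hfi : ∀ i (hi2 : 2 ≤ i) (hin : i ≤ n) (l : Fin n → ℕ),
      f i (single (update l ⟨i - 2, by have _hx := hin; omega⟩ (l ⟨i - 2, by have _hx := hin; omega⟩ + 1)) 1) =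
      ((Real.sqrt (qb q ((l ⟨i - 2, by have _hx := hin; omega⟩ : ℝ) + 1) *
          qb q ((l ⟨i - 1, by have _hx := hin; omega⟩ : ℝ) + 1)) : ℝ) : ℂ) •
        single (update l ⟨i - 1, by have _hx := hin; omega⟩ (l ⟨i - 1, by have _hx := hin; omega⟩ + 1)) 1)
    (i : ℕ) (hi1 : 1 ≤ i) (hin : i ≤ n)
    (C : ℕ → Prop) (hCe : ∀ m, C (m + 1) → C m ∨ m = p)
    (hCf : ∀ m, C m → C (m + 1) ∨ m = p) :
    ∀ v ∈ Submodule.span ℂ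
        {w : (Fin n → ℕ) →₀ ℂ | ∃ l : Fin n → ℕ, C (∑ k, l k) ∧ w = single l 1},
      h i v ∈ Submodule.span ℂ
          {w : (Fin n → ℕ) →₀ ℂ | ∃ l : Fin n → ℕ, C (∑ k, l k) ∧ w = single l 1} ∧
      e i v ∈ Submodule.span ℂ
          {w : (Fin n → ℕ) →₀ ℂ | ∃ l : Fin n → ℕ, C (∑ k, l k) ∧ w = single l 1} ∧
      f i v ∈ Submodule.span ℂ
          {w : (Fin n → ℕ) →₀ ℂ | ∃ l : Fin n → ℕ, C (∑ k, l k) ∧ w = single l 1} := by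
  intro v hv
  set S : Set ((Fin n → ℕ) →₀ ℂ) :=
    {w | ∃ l : Fin n → ℕ, C (∑ k, l k) ∧ w = single l 1} with hS
  set T := Submodule.span ℂ S with hT
  have memT : ∀ l : Fin n → ℕ, C (∑ k, l k) → (single l 1 : (Fin n → ℕ) →₀ ℂ) ∈ T :=
    fun l hl => Submodule.subset_span ⟨l, hl, rfl⟩
  have main : ∀ g : (((Fin n → ℕ) →₀ ℂ) →ₗ[ℂ] ((Fin n → ℕ) →₀ ℂ)),
      (∀ l : Fin n → ℕ, C (∑ k, l k) → g (single l 1) ∈ T) → g v ∈ T := by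
    intro g hg
    have hsub : S ⊆ (Submodule.comap g T : Set _) := by
      rintro w ⟨l, hl, rfl⟩; exact hg l hl
    exact Submodule.span_le.mpr hsub hv
  -- coefficient vanishing helper
  have coefzero : ∀ (l : Fin n → ℕ), (∑ k, l k) = p →
      qb q ((p : ℝ) - ∑ k, (l k : ℝ)) = 0 := by
    intro l hl
    have : (∑ k, (l k : ℝ)) = (p : ℝ) := by rw [← Nat.cast_sum, hl]
    rw [this, sub_self, qb_zero']
  refine ⟨?_, ?_, ?_⟩
  · -- h i
    refine main (h i) fun l hl => ?_
    by_cases hi2 : 2 ≤ i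
    · rw [hhi i hi2 hin l]; exact Submodule.smul_mem _ _ (memT l hl)
    · have hi : i = 1 := by omega
      subst hi
      rw [hh1 l]; exact Submodule.smul_mem _ _ (memT l hl)
  · -- e i
    refine main (e i) fun l hl => ?_
    by_cases hi2 : 2 ≤ i
    · by_cases h0 : l ⟨i - 1, by omega⟩ = 0
      · rw [hei0 i hi2 hin l h0]; exact Submodule.zero_mem _
      · set b : Fin n := ⟨i - 1, by omega⟩ with hb
        set l' := Function.update l b (l b - 1) with hl'
        have hupd : Function.update l' b (l' b + 1) = l := by
          funext k
          by_cases hk : k = b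
          · subst hk; simp [hl']; omega
          · simp [hl', Function.update_of_ne hk]
        have hsum : (∑ k, l k) = (∑ k, l' k) + 1 := by
          rw [← sum_update_succ l' b, hupd]
        rw [show (single l (1:ℂ) : (Fin n → ℕ) →₀ ℂ)
            = single (Function.update l' b (l' b + 1)) 1 by rw [hupd]]
        rw [hei i hi2 hin l']
        refine Submodule.smul_mem _ _ (memT _ ?_)
        rw [sum_update_succ]
        exact hsum ▸ hl
    · have hi : i = 1 := by omega
      subst hi
      by_cases h0 : l ⟨0, hn⟩ = 0
      · rw [he10 l h0]; exact Submodule.zero_mem _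
      · set b : Fin n := ⟨0, hn⟩ with hb
        set l' := Function.update l b (l b - 1) with hl'
        have hupd : Function.update l' b (l' b + 1) = l := by
          funext k
          by_cases hk : k = b
          · subst hk; simp [hl']; omega
          · simp [hl', Function.update_of_ne hk]
        have hsum : (∑ k, l k) = (∑ k, l' k) + 1 := by
          rw [← sum_update_succ l' b, hupd]
        rw [show (single l (1:ℂ) : (Fin n → ℕ) →₀ ℂ)
            = single (Function.update l' b (l' b + 1)) 1 by rw [hupd]]
        rw [he1 l']
        rcases hCe (∑ k, l' k) (hsum ▸ hl) with hc | hc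
        · exact Submodule.smul_mem _ _ (memT _ hc)
        · rw [coefzero l' hc, mul_zero, Real.sqrt_zero, Complex.ofReal_zero, zero_smul]
          exact Submodule.zero_mem _
  · -- f i
    refine main (f i) fun l hl => ?_
    by_cases hi2 : 2 ≤ i
    · by_cases h0 : l ⟨i - 2, by omega⟩ = 0
      · rw [hfi0 i hi2 hin l h0]; exact Submodule.zero_mem _
      · set a : Fin n := ⟨i - 2, by omega⟩ with ha
        set l' := Function.update l a (l a - 1) with hl'
        have hupd : Function.update l' a (l' a + 1) = l := by
          funext k
          by_cases hk : k = a
          · subst hk; simp [hl']; omega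
          · simp [hl', Function.update_of_ne hk]
        have hsum : (∑ k, l k) = (∑ k, l' k) + 1 := by
          rw [← sum_update_succ l' a, hupd]
        rw [show (single l (1:ℂ) : (Fin n → ℕ) →₀ ℂ)
            = single (Function.update l' a (l' a + 1)) 1 by rw [hupd]]
        rw [hfi i hi2 hin l']
        refine Submodule.smul_mem _ _ (memT _ ?_)
        rw [sum_update_succ]
        exact hsum ▸ hl
    · have hi : i = 1 := by omega
      subst hi
      rw [hf1 l]
      rcases hCf (∑ k, l k) hl with hc | hc
      · refine Submodule.smul_mem _ _ (memT _ ?_)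
        rw [sum_update_succ]
        exact hc
      · rw [coefzero l hc, mul_zero, Real.sqrt_zero, Complex.ofReal_zero, zero_smul]
        exact Submodule.zero_mem _

theorem holstein_primakoff_invariant_subspaces (q : ℝ) (n p : ℕ) (hq : 0 < q) (hq1 : q ≠ 1)
    (hn : 1 ≤ n)
    (h e f : ℕ → (((Fin n → ℕ) →₀ ℂ) →ₗ[ℂ] ((Fin n → ℕ) →₀ ℂ)))
    (hh1 : ∀ l : Fin n → ℕ, h 1 (single l 1) =
      (((p : ℝ) - (∑ k, (l k : ℝ)) - (l ⟨0, hn⟩ : ℝ) : ℝ) : ℂ) • single l 1)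
    (hhi : ∀ i (hi2 : 2 ≤ i) (hin : i ≤ n) (l : Fin n → ℕ), h i (single l 1) =
      (((l ⟨i - 2, by omega⟩ : ℝ) - (l ⟨i - 1, by omega⟩ : ℝ) : ℝ) : ℂ) • single l 1)
    (he10 : ∀ l : Fin n → ℕ, l ⟨0, hn⟩ = 0 → e 1 (single l 1) = 0)
    (he1 : ∀ l : Fin n → ℕ,
      e 1 (single (update l ⟨0, hn⟩ (l ⟨0, hn⟩ + 1)) 1) =
      ((Real.sqrt (qb q ((l ⟨0, hn⟩ : ℝ) + 1) *
          qb q ((p : ℝ) - ∑ k, (l k : ℝ))) : ℝ) : ℂ) • single l 1)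
    (hf1 : ∀ l : Fin n → ℕ,
      f 1 (single l 1) =
      ((Real.sqrt (qb q ((l ⟨0, hn⟩ : ℝ) + 1) *
          qb q ((p : ℝ) - ∑ k, (l k : ℝ))) : ℝ) : ℂ) •
        single (update l ⟨0, hn⟩ (l ⟨0, hn⟩ + 1)) 1)
    (hei0 : ∀ i (hi2 : 2 ≤ i) (hin : i ≤ n) (l : Fin n → ℕ),
      l ⟨i - 1, by omega⟩ = 0 → e i (single l 1) = 0)
    (hei : ∀ i (hi2 : 2 ≤ i) (hin : i ≤ n) (l : Fin n → ℕ),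
      e i (single (update l ⟨i - 1, by omega⟩ (l ⟨i - 1, by omega⟩ + 1)) 1) =
      ((Real.sqrt (qb q ((l ⟨i - 2, by omega⟩ : ℝ) + 1) *
          qb q ((l ⟨i - 1, by omega⟩ : ℝ) + 1)) : ℝ) : ℂ) •
        single (update l ⟨i - 2, by omega⟩ (l ⟨i - 2, by omega⟩ + 1)) 1)
    (hfi0 : ∀ i (hi2 : 2 ≤ i) (hin : i ≤ n) (l : Fin n → ℕ),
      l ⟨i - 2, by omega⟩ = 0 → f i (single l 1) = 0)
    (hfi : ∀ i (hi2 : 2 ≤ i) (hin : i ≤ n) (l : Fin n → ℕ),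
      f i (single (update l ⟨i - 2, by omega⟩ (l ⟨i - 2, by omega⟩ + 1)) 1) =
      ((Real.sqrt (qb q ((l ⟨i - 2, by omega⟩ : ℝ) + 1) *
          qb q ((l ⟨i - 1, by omega⟩ : ℝ) + 1)) : ℝ) : ℂ) •
        single (update l ⟨i - 1, by omega⟩ (l ⟨i - 1, by omega⟩ + 1)) 1) :
    ∀ i : ℕ, 1 ≤ i → i ≤ n →
      (∀ v ∈ lowSub n p,
        h i v ∈ lowSub n p ∧ e i v ∈ lowSub n p ∧ f i v ∈ lowSub n p) ∧
      (∀ v ∈ highSub n p,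
        h i v ∈ highSub n p ∧ e i v ∈ highSub n p ∧ f i v ∈ highSub n p) := by
  intro i hi1 hin
  constructor
  · intro v hv
    exact hp_aux q n p hn h e f hh1 hhi he10 he1 hf1 hei0 hei hfi0 hfi i hi1 hin
      (fun m => m ≤ p) (fun m hm => by omega) (fun m hm => by omega) v hv
  · intro v hv
    exact hp_aux q n p hn h e f hh1 hhi he10 he1 hf1 hei0 hei hfi0 hfi i hi1 hin
      (fun m => p < m) (fun m hm => by omega) (fun m hm => by omega) v hv
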